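/- arXiv:0811.0507 — 5 statements merged into one kernel-verified Lean document; each statement's English description precedes it below -/
import Mathlib

section
/- For the type B_m Weyl group W (signed permutations) acting on ℝ^m, Σ_{w ∈ W} det(w) exp(⟨x, w y⟩) = det[exp(x_i y_j) - exp(-x_i y_j)]_{i,j=1}^m = det[2 sinh(x_i y_j)]_{i,j=1}^m for all x, y ∈ ℝ^m. -/
open Matrix

/-- The sign changes `ε` act coordinatewise and independently, so the alternating sum over
them factors into a product of one-dimensional alternating sums `exp a - exp (-a)`. -/
lemma sum_signs_mul_exp_sum {ι : Type*} [Fintype ι] [DecidableEq ι] (u v : ι → ℝ) :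
    ∑ ε : ι → Bool,
        (∏ i, (if ε i then (1 : ℝ) else -1)) *
          Real.exp (∑ i, u i * ((if ε i then (1 : ℝ) else -1) * v i))
      = ∏ i, (Real.exp (u i * v i) - Real.exp (-(u i * v i))) := by
  have one_coordinate : ∀ i, Real.exp (u i * v i) - Real.exp (-(u i * v i))
      = ∑ b : Bool, (if b then (1 : ℝ) else -1) *
          Real.exp (u i * ((if b then (1 : ℝ) else -1) * v i)) := by
    intro i
    simp only [Fintype.sum_bool, if_true, Bool.false_eq_true, if_false]
    ring_nf
  simp_rw [one_coordinate, Fintype.prod_sum, Real.exp_sum, ← Finset.prod_mul_distrib]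

lemma exp_sub_exp_neg_eq_two_mul_sinh (a : ℝ) : Real.exp a - Real.exp (-a) = 2 * Real.sinh a := by
  rw [Real.sinh_eq]
  ring

/-- For the type `B_m` Weyl group of signed permutations `w = (σ, ε)`, acting by
`(w y) i = ε i * y (σ⁻¹ i)` with `det w = sign σ * ∏ ε i`, one has
`∑_{w} det w * exp ⟨x, w y⟩ = det [exp (xᵢ yⱼ) - exp (-xᵢ yⱼ)] = det [2 sinh (xᵢ yⱼ)]`. -/
theorem typeB_weyl_sum_det (m : ℕ) (x y : Fin m → ℝ) :
    (∑ σ : Equiv.Perm (Fin m), ∑ ε : Fin m → Bool,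
        ((Equiv.Perm.sign σ : ℤ) : ℝ) * (∏ i, (if ε i then (1 : ℝ) else -1)) *
          Real.exp (∑ i, x i * ((if ε i then (1 : ℝ) else -1) * y (σ⁻¹ i))))
      = (Matrix.of fun i j : Fin m =>
          Real.exp (x i * y j) - Real.exp (-(x i * y j))).det ∧
    (Matrix.of fun i j : Fin m =>
        Real.exp (x i * y j) - Real.exp (-(x i * y j))).det
      = (Matrix.of fun i j : Fin m => 2 * Real.sinh (x i * y j)).det := by
  refine ⟨?_, by simp_rw [exp_sub_exp_neg_eq_two_mul_sinh]⟩
  -- Match each `σ` with its Leibniz term `sign σ • ∏ i, M (σ i) i`, reindexing the product by `σ`.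
  rw [det_apply]
  refine Finset.sum_congr rfl fun σ _ => ?_
  simp_rw [mul_assoc, ← Finset.mul_sum]
  rw [sum_signs_mul_exp_sum x (fun i => y (σ⁻¹ i)), Units.smul_def, zsmul_eq_mul,
    ← Equiv.prod_comp σ]
  simp
end

section
/- For the type D_m Weyl group W^D (permutations combined with an even number of sign changes) acting on ℝ^m, Σ_{w ∈ W^D} det(w) exp(⟨x, w y⟩) = (1/2)( det[exp(x_i y_j) - exp(-x_i y_j)]_{i,j} + det[exp(x_i y_j) + exp(-x_i y_j)]_{i,j} ). -/
/-!
For a sign vector `ε`, the indicator of an even number of minus signs is `(1 + ∏ εᵢ) / 2`, and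
`(∏ εᵢ)² = 1`. Hence the sum over `W^D` is half the sum of the corresponding signed sum over the
hyperoctahedral group `W^B` and of the unsigned one. For fixed `σ`, summing over all sign vectors
factors as a product over `i` of `exp (aᵢ) ∓ exp (-aᵢ)` with `aᵢ = xᵢ y_{σ⁻¹ i}`, and the remaining
sum over `σ` is the Leibniz expansion of the two determinants.
-/

open Finset

theorem prod_ite_one_neg_one {ι R : Type*} [Fintype ι] [CommMonoid R] [HasDistribNeg R]
    (ε : ι → Bool) : ∏ i, (if ε i then (1 : R) else -1) = (-1) ^ #{i | ε i = false} := by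
  rw [prod_ite]
  simp

theorem neg_one_pow_mul_ite_even {K : Type*} [Field K] [NeZero (2 : K)] (n : ℕ) (c : K) :
    (-1) ^ n * (if Even n then c else 0) = 1 / 2 * ((-1) ^ n * c + c) := by
  rcases n.even_or_odd with h | h
  · rw [if_pos h, h.neg_one_pow]
    field_simp
    ring
  · rw [if_neg (Nat.not_even_iff_odd.2 h), h.neg_one_pow]
    ring

theorem sum_prod_sign_mul_ite_even {ι K : Type*} [Fintype ι] [DecidableEq ι] [Field K]
    [NeZero (2 : K)] (c : (ι → Bool) → K) :
    ∑ ε : ι → Bool, (∏ i, (if ε i then (1 : K) else -1)) *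
        (if Even #{i | ε i = false} then c ε else 0)
      = 1 / 2 * (∑ ε, (∏ i, (if ε i then (1 : K) else -1)) * c ε + ∑ ε, c ε) := by
  rw [← sum_add_distrib, mul_sum]
  refine sum_congr rfl fun ε _ => ?_
  rw [prod_ite_one_neg_one, neg_one_pow_mul_ite_even]

section SignExpansion

variable {ι : Type*} [Fintype ι] [DecidableEq ι] (a : ι → ℝ)

theorem sum_prod_sign_mul_exp_sum_sign_mul :
    ∑ ε : ι → Bool, (∏ i, (if ε i then (1 : ℝ) else -1)) *
        Real.exp (∑ i, (if ε i then (1 : ℝ) else -1) * a i)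
      = ∏ i, (Real.exp (a i) - Real.exp (-a i)) := by
  simp_rw [Real.exp_sum, ← prod_mul_distrib]
  rw [← Fintype.prod_sum fun i (b : Bool) =>
    (if b then (1 : ℝ) else -1) * Real.exp ((if b then (1 : ℝ) else -1) * a i)]
  simp [sub_eq_add_neg]

theorem sum_exp_sum_sign_mul :
    ∑ ε : ι → Bool, Real.exp (∑ i, (if ε i then (1 : ℝ) else -1) * a i)
      = ∏ i, (Real.exp (a i) + Real.exp (-a i)) := by
  simp_rw [Real.exp_sum]
  rw [← Fintype.prod_sum fun i (b : Bool) => Real.exp ((if b then (1 : ℝ) else -1) * a i)]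
  simp

end SignExpansion

theorem Matrix.det_eq_sum_sign_mul_prod_inv {n R : Type*} [DecidableEq n] [Fintype n] [CommRing R]
    (M : Matrix n n R) :
    M.det = ∑ σ : Equiv.Perm n, ((Equiv.Perm.sign σ : ℤ) : R) * ∏ i, M i (σ⁻¹ i) := by
  rw [← det_transpose, det_apply', ← Equiv.sum_comp (Equiv.inv _)]
  simp

/-- For the type `D_m` Weyl group of signed permutations with an even number of
sign changes, `∑_{w ∈ W^D} det w * exp ⟨x, w y⟩` equals half the sum of
`det [exp (xᵢ yⱼ) - exp (-xᵢ yⱼ)]` and `det [exp (xᵢ yⱼ) + exp (-xᵢ yⱼ)]`. -/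
theorem typeD_weyl_sum_det (m : ℕ) (x y : Fin m → ℝ) :
    (∑ σ : Equiv.Perm (Fin m), ∑ ε : Fin m → Bool,
        if Even ((Finset.univ.filter fun i : Fin m => ε i = false).card) then
          ((Equiv.Perm.sign σ : ℤ) : ℝ) * (∏ i, (if ε i then (1 : ℝ) else -1)) *
            Real.exp (∑ i, x i * ((if ε i then (1 : ℝ) else -1) * y (σ⁻¹ i)))
        else 0)
      = (1 / 2) *
        ((Matrix.of fun i j : Fin m =>
            Real.exp (x i * y j) - Real.exp (-(x i * y j))).det +
         (Matrix.of fun i j : Fin m =>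
            Real.exp (x i * y j) + Real.exp (-(x i * y j))).det) := by
  simp_rw [mul_assoc, ← mul_ite_zero, ← mul_sum, mul_left_comm (x _)]
  simp_rw [sum_prod_sign_mul_ite_even, sum_prod_sign_mul_exp_sum_sign_mul, sum_exp_sum_sign_mul]
  simp_rw [Matrix.det_eq_sum_sign_mul_prod_inv, Matrix.of_apply, ← sum_add_distrib, mul_sum]
  refine sum_congr rfl fun σ _ => ?_
  ring
end

section
/- The function h(y) = Π_{α ∈ R_+} ⟨α, y⟩, where R_+ is the positive system of type A_{m-1} (so h is the Vandermonde polynomial Π_{i<j}(y_i - y_j)), is harmonic on ℝ^m: Δh = 0. -/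
/-!
For a product of linear forms, `Δ ∏_p ⟨α_p, y⟩ = ∑_{p ≠ q} ⟨α_p, α_q⟩ ∏_{r ≠ p, q} ⟨α_r, y⟩`.
For the roots `e_a - e_b` of type `A`, `⟨α_p, α_q⟩` vanishes unless `p` and `q` share an index `i`,
so the sum runs over triples `(i, j, k)` of distinct indices (`p = {i, j}`, `q = {i, k}`).
The term of such a triple is `ε · Q · (y_j - y_k)` with `ε` and `Q` invariant under cyclic
rotation of the triple, so the three rotations add up to a multiple of
`(y_j - y_k) + (y_k - y_i) + (y_i - y_j) = 0`.
-/

open Finset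

noncomputable def laplacian {m : ℕ} (f : (Fin m → ℝ) → ℝ) (x : Fin m → ℝ) : ℝ :=
  ∑ i, iteratedDeriv 2 (fun s => f (Function.update x i s)) (x i)

open Polynomial

theorem Polynomial.derivative_derivative_prod_of_derivative_eq_C {R ι : Type*} [CommSemiring R]
    [DecidableEq ι] {s : Finset ι} {f : ι → R[X]} {a : ι → R}
    (hf : ∀ i, derivative (f i) = C (a i)) :
    derivative (derivative (∏ i ∈ s, f i)) =
      ∑ i ∈ s, ∑ j ∈ s.erase i, C (a i * a j) * ∏ k ∈ (s.erase i).erase j, f k := by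
  rw [derivative_prod_finset, map_sum]
  refine sum_congr rfl fun i _ => ?_
  rw [hf, derivative_mul, derivative_C, mul_zero, add_zero, derivative_prod_finset, sum_mul]
  refine sum_congr rfl fun j _ => ?_
  rw [hf, C_mul]
  ring

theorem Polynomial.iteratedDeriv_eval {𝕜 : Type*} [NontriviallyNormedField 𝕜] (n : ℕ) (p : 𝕜[X]) :
    iteratedDeriv n (fun s => p.eval s) = fun s => (derivative^[n] p).eval s := by
  induction n with
  | zero => rfl
  | succ n ih =>
    ext s
    rw [iteratedDeriv_succ, ih, Polynomial.deriv, Function.iterate_succ_apply']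

theorem laplacian_prod_dotProduct {m : ℕ} {ι : Type*} [DecidableEq ι] (s : Finset ι)
    (α : ι → Fin m → ℝ) (x : Fin m → ℝ) :
    laplacian (fun y => ∏ p ∈ s, α p ⬝ᵥ y) x =
      ∑ p ∈ s, ∑ q ∈ s.erase p, (α p ⬝ᵥ α q) * ∏ r ∈ (s.erase p).erase q, α r ⬝ᵥ x := by
  have line (i : Fin m) (p : ι) (t : ℝ) :
      α p ⬝ᵥ Function.update x i t = (C (α p ⬝ᵥ x) + C (α p i) * (X - C (x i))).eval t := by
    simp only [Pi.update_eq_sub_add_single, dotProduct_add, dotProduct_sub, dotProduct_single,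
      eval_add, eval_mul, eval_sub, eval_C, eval_X]
    ring
  have second_partial (i : Fin m) :
      iteratedDeriv 2 (fun t => ∏ p ∈ s, α p ⬝ᵥ Function.update x i t) (x i) =
        ∑ p ∈ s, ∑ q ∈ s.erase p, α p i * α q i * ∏ r ∈ (s.erase p).erase q, α r ⬝ᵥ x := by
    simp_rw [line, ← eval_prod, iteratedDeriv_eval, Function.iterate_succ_apply',
      Function.iterate_zero_apply]
    rw [derivative_derivative_prod_of_derivative_eq_C (a := fun p => α p i) (by simp)]
    simp [eval_finsetSum, eval_prod]
  simp only [laplacian, second_partial]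
  rw [sum_comm]
  refine sum_congr rfl fun p _ => ?_
  rw [sum_comm]
  refine sum_congr rfl fun q _ => ?_
  rw [dotProduct, sum_mul]

def distinctTriples (ι : Type*) [DecidableEq ι] [Fintype ι] : Finset (ι × ι × ι) :=
  univ.filter fun t => t.1 ≠ t.2.1 ∧ t.1 ≠ t.2.2 ∧ t.2.1 ≠ t.2.2

theorem sum_distinctTriples {ι M : Type*} [DecidableEq ι] [Fintype ι] [AddCommMonoid M]
    (f : ι × ι × ι → M) :
    ∑ t ∈ distinctTriples ι, f t =
      ∑ i, ∑ j ∈ univ.filter (i ≠ ·), ∑ k ∈ univ.filter (fun k => i ≠ k ∧ j ≠ k), f (i, j, k) := by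
  rw [sum_finset_product (distinctTriples ι) univ
    fun i => univ.filter fun jk : ι × ι => i ≠ jk.1 ∧ i ≠ jk.2 ∧ jk.1 ≠ jk.2]
  · refine sum_congr rfl fun i _ => ?_
    rw [sum_finset_product _ (univ.filter (i ≠ ·)) fun j => univ.filter fun k => i ≠ k ∧ j ≠ k]
    simp
  · simp [distinctTriples]

theorem sum_distinctTriples_eq_zero_of_cyclic {ι : Type*} [DecidableEq ι] [Fintype ι]
    {f : ι × ι × ι → ℝ}
    (hf : ∀ i j k, i ≠ j → i ≠ k → j ≠ k → f (i, j, k) + f (j, k, i) + f (k, i, j) = 0) :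
    ∑ t ∈ distinctTriples ι, f t = 0 := by
  -- `(i, j, k) ↦ (j, k, i)`
  let rotate : ι × ι × ι ≃ ι × ι × ι := (Equiv.prodComm ι (ι × ι)).trans (Equiv.prodAssoc ι ι ι)
  have sum_rotate (g : ι × ι × ι → ℝ) :
      ∑ t ∈ distinctTriples ι, g (rotate t) = ∑ t ∈ distinctTriples ι, g t :=
    sum_equiv rotate (fun t => by simp [rotate, distinctTriples]; grind) fun _ _ => rfl
  have hsum : ∑ t ∈ distinctTriples ι, (f t + f (rotate t) + f (rotate (rotate t))) = 0 :=
    sum_eq_zero fun ⟨i, j, k⟩ ht => by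
      obtain ⟨hij, hik, hjk⟩ := (mem_filter.1 ht).2
      exact hf i j k hij hik hjk
  rw [sum_add_distrib, sum_add_distrib, sum_rotate fun t => f (rotate t), sum_rotate] at hsum
  linarith

section TypeA

variable {ι : Type*} [LinearOrder ι]

variable (ι) in
def posPairs [Fintype ι] : Finset (ι × ι) :=
  univ.filter fun p => p.1 < p.2

def pairRoot (p : ι × ι) : ι → ℝ := Pi.single p.1 1 - Pi.single p.2 1

def sortedPair (i j : ι) : ι × ι := if i < j then (i, j) else (j, i)

noncomputable def ltSign (i j : ι) : ℝ := if i < j then 1 else -1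

theorem pairRoot_dotProduct [Fintype ι] (p : ι × ι) (y : ι → ℝ) :
    pairRoot p ⬝ᵥ y = y p.1 - y p.2 := by
  simp [pairRoot, sub_dotProduct]

theorem sortedPair_comm (i j : ι) : sortedPair i j = sortedPair j i := by
  unfold sortedPair
  rcases lt_trichotomy i j with h | h | h <;> simp [h, not_lt_of_gt]

theorem ltSign_comm {i j : ι} (h : i ≠ j) : ltSign j i = -ltSign i j := by
  unfold ltSign
  rcases h.lt_or_gt with h | h <;> simp [h, not_lt_of_gt]

theorem sortedPair_injective (i : ι) : Function.Injective (sortedPair i) := by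
  intro j k h
  unfold sortedPair at h
  split_ifs at h with hj hk hk <;> simp only [Prod.mk.injEq] at h <;> grind

theorem sortedPair_mem_posPairs [Fintype ι] {i j : ι} : sortedPair i j ∈ posPairs ι ↔ i ≠ j := by
  unfold sortedPair posPairs
  rcases lt_trichotomy i j with h | h | h <;> simp [h, not_lt_of_gt, ne_of_lt, ne_of_gt]

theorem pairRoot_sortedPair_apply_left {i j : ι} (h : i ≠ j) :
    pairRoot (sortedPair i j) i = ltSign i j := by
  unfold pairRoot sortedPair ltSign
  rcases h.lt_or_gt with h | h <;> simp [h, h.ne, h.ne', not_lt_of_gt]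

theorem pairRoot_sortedPair_dotProduct [Fintype ι] (i j : ι) (y : ι → ℝ) :
    pairRoot (sortedPair i j) ⬝ᵥ y = ltSign i j * (y i - y j) := by
  rw [pairRoot_dotProduct]
  unfold sortedPair ltSign
  rcases lt_trichotomy i j with h | h | h <;> simp [h, not_lt_of_gt]

theorem sum_pairRoot_apply_mul [Fintype ι] {T : Finset (ι × ι)} (hT : T ⊆ posPairs ι) (i : ι)
    (F : ι × ι → ℝ) :
    ∑ p ∈ T, pairRoot p i * F p =
      ∑ j ∈ univ.filter (sortedPair i · ∈ T), pairRoot (sortedPair i j) i * F (sortedPair i j) := by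
  rw [← sum_image (f := fun p => pairRoot p i * F p) (sortedPair_injective i).injOn]
  refine (sum_subset (by simp [subset_iff]) fun p hpT hp => ?_).symm
  suffices pairRoot p i = 0 by rw [this, zero_mul]
  have hlt : p.1 < p.2 := (mem_filter.1 (hT hpT)).2
  have h1 : p.1 ≠ i := fun h => hp (mem_image.2 ⟨p.2, by simp [sortedPair, ← h, hlt, hpT]⟩)
  have h2 : p.2 ≠ i := fun h =>
    hp (mem_image.2 ⟨p.1, by simp [sortedPair, ← h, hlt, not_lt_of_gt, hpT]⟩)
  simp [pairRoot, h1.symm, h2.symm]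

theorem prod_erase_erase_sortedPair [Fintype ι] {i j k : ι} (hij : i ≠ j) (hik : i ≠ k)
    (hjk : j ≠ k) (x : ι → ℝ) :
    ∏ r ∈ ((posPairs ι).erase (sortedPair i j)).erase (sortedPair i k), pairRoot r ⬝ᵥ x =
      ltSign j k * (x j - x k) * ∏ r ∈ (((posPairs ι).erase (sortedPair i j)).erase
        (sortedPair i k)).erase (sortedPair j k), pairRoot r ⬝ᵥ x := by
  have hmem : sortedPair j k ∈ ((posPairs ι).erase (sortedPair i j)).erase (sortedPair i k) := by
    refine mem_erase.2 ⟨?_, mem_erase.2 ⟨?_, sortedPair_mem_posPairs.2 hjk⟩⟩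
    · rw [sortedPair_comm j, sortedPair_comm i]
      exact (sortedPair_injective k).ne hij.symm
    · rw [sortedPair_comm i]
      exact (sortedPair_injective j).ne hik.symm
  rw [← mul_prod_erase _ _ hmem, pairRoot_sortedPair_dotProduct]

theorem sum_sum_pairRoot_dotProduct_mul_prod_eq_zero [Fintype ι] (x : ι → ℝ) :
    ∑ p ∈ posPairs ι, ∑ q ∈ (posPairs ι).erase p,
      (pairRoot p ⬝ᵥ pairRoot q) * ∏ r ∈ ((posPairs ι).erase p).erase q, pairRoot r ⬝ᵥ x = 0 := by
  set S := posPairs ι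
  set P : ι × ι → ι × ι → ℝ := fun p q => ∏ r ∈ (S.erase p).erase q, pairRoot r ⬝ᵥ x
  calc ∑ p ∈ S, ∑ q ∈ S.erase p, (pairRoot p ⬝ᵥ pairRoot q) * P p q
        = ∑ i, ∑ p ∈ S, pairRoot p i * ∑ q ∈ S.erase p, pairRoot q i * P p q := by
        simp only [dotProduct, sum_mul, mul_sum]
        rw [sum_comm]
        refine sum_congr rfl fun p _ => ?_
        rw [sum_comm]
        refine sum_congr rfl fun q _ => ?_
        refine sum_congr rfl fun i _ => ?_
        ring
    _ = ∑ i, ∑ j ∈ univ.filter (i ≠ ·), pairRoot (sortedPair i j) i *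
          ∑ k ∈ univ.filter (fun k => i ≠ k ∧ j ≠ k),
            pairRoot (sortedPair i k) i * P (sortedPair i j) (sortedPair i k) := by
        refine sum_congr rfl fun i _ => ?_
        rw [sum_pairRoot_apply_mul subset_rfl]
        simp only [sortedPair_mem_posPairs]
        refine sum_congr rfl fun j _ => ?_
        rw [sum_pairRoot_apply_mul (erase_subset _ _)]
        congr 2 with k
        simp only [mem_filter, mem_univ, true_and, mem_erase, sortedPair_mem_posPairs,
          ne_eq, (sortedPair_injective i).eq_iff]
        tauto
    _ = ∑ t ∈ distinctTriples ι, pairRoot (sortedPair t.1 t.2.1) t.1 *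
          (pairRoot (sortedPair t.1 t.2.2) t.1 * P (sortedPair t.1 t.2.1) (sortedPair t.1 t.2.2)) := by
        simp only [sum_distinctTriples, mul_sum]
    _ = 0 := by
        refine sum_distinctTriples_eq_zero_of_cyclic fun i j k hij hik hjk => ?_
        have erase_rotate (a b c : ι × ι) :
            ((S.erase a).erase b).erase c = ((S.erase b).erase c).erase a := by
          ext; simp only [mem_erase]; tauto
        simp only [P]
        rw [pairRoot_sortedPair_apply_left hij, pairRoot_sortedPair_apply_left hik,
          pairRoot_sortedPair_apply_left hjk, pairRoot_sortedPair_apply_left hij.symm,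
          pairRoot_sortedPair_apply_left hik.symm, pairRoot_sortedPair_apply_left hjk.symm,
          prod_erase_erase_sortedPair hij hik hjk, prod_erase_erase_sortedPair hjk hij.symm hik.symm,
          prod_erase_erase_sortedPair hik.symm hjk.symm hij, ltSign_comm hij, ltSign_comm hik,
          ltSign_comm hjk, sortedPair_comm j i, sortedPair_comm k i, sortedPair_comm k j,
          erase_rotate (sortedPair j k), ← erase_rotate (sortedPair i j)]
        ring

end TypeA

/-- The Vandermonde polynomial `∏_{i<j} (y i - y j)` (the product of the type `A`
positive roots `⟨e i - e j, y⟩`) is harmonic. -/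
theorem vandermonde_harmonic (m : ℕ) (x : Fin m → ℝ) :
    laplacian
      (fun y : Fin m → ℝ =>
        ∏ p ∈ Finset.univ.filter fun p : Fin m × Fin m => p.1 < p.2,
          (y p.1 - y p.2)) x = 0 := by
  simp_rw [← pairRoot_dotProduct]
  exact (laplacian_prod_dotProduct _ _ x).trans (sum_sum_pairRoot_dotProduct_mul_prod_eq_zero x)
end

section
/- The Vandermonde-of-squares polynomial h(y) = Π_{1 ≤ i < j ≤ m}(y_i^2 - y_j^2) is harmonic on ℝ^m. -/
/-! Write `z = y ^ 2`. Along a coordinate line every factor `y a ^ 2 - y b ^ 2` is a quadratic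
polynomial, so the second-order Leibniz rule expresses `Δ h` through the pairings
`∑ i, r p i * r q i * z i` of the roots `r p = e a - e b`; the terms carrying a second derivative
of a single factor cancel because every root has coordinate sum zero. What is left is
`∑ i, z i * ∂²/∂z i²` applied to the Vandermonde product `V z = ∏_{a<b} (z a - z b)`, and it
vanishes identically: for distinct `z`, dividing by `V z` turns it into the sum over distinct
`i, j, k` of `z i / ((z i - z j) * (z i - z k))`, whose cyclic sums are zero; the general case is
the specialisation of the generic point of `ℤ[z₁, …, zₘ]`. -/

open Finset

section Leibniz

variable {𝕜 ι 𝔸 : Type*} [NontriviallyNormedField 𝕜] [NormedCommRing 𝔸] [NormedAlgebra 𝕜 𝔸]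
  [DecidableEq ι]

theorem iteratedDeriv_two_finsetProd {s : Finset ι} {f f' : ι → 𝕜 → 𝔸} {f'' : ι → 𝔸} {x : 𝕜}
    (hf : ∀ i ∈ s, ∀ t, HasDerivAt (f i) (f' i t) t)
    (hf' : ∀ i ∈ s, HasDerivAt (f' i) (f'' i) x) :
    iteratedDeriv 2 (fun t => ∏ i ∈ s, f i t) x =
      ∑ i ∈ s, ((∑ j ∈ s.erase i, (∏ k ∈ (s.erase i).erase j, f k x) * f' j x) * f' i x
        + (∏ j ∈ s.erase i, f j x) * f'' i) := by
  have hderiv : deriv (fun t => ∏ i ∈ s, f i t) =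
      fun t => ∑ i ∈ s, (∏ j ∈ s.erase i, f j t) * f' i t := funext fun t => by
    simpa only [smul_eq_mul] using (HasDerivAt.fun_finsetProd fun i hi => hf i hi t).deriv
  rw [iteratedDeriv_succ, iteratedDeriv_one, hderiv]
  refine (HasDerivAt.fun_sum fun i hi => ?_).deriv
  simpa only [smul_eq_mul] using
    (HasDerivAt.fun_finsetProd fun j hj => hf j (mem_of_mem_erase hj) x).fun_mul (hf' i hi)

end Leibniz

theorem Finset.sum_sum_erase_mul {ι R : Type*} [DecidableEq ι] [CommRing R] (s : Finset ι)
    (f : ι → R) :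
    ∑ i ∈ s, ∑ j ∈ s.erase i, f i * f j = (∑ i ∈ s, f i) ^ 2 - ∑ i ∈ s, f i ^ 2 := by
  rw [sq, sum_mul_sum, ← sum_sub_distrib]
  refine sum_congr rfl fun i hi => ?_
  rw [← add_sum_erase s _ hi, sq]
  ring

theorem sum_mul_inv_sub_mul_inv_sub {ι K : Type*} [Fintype ι] [DecidableEq ι] [Field K]
    [CharZero K] {z : ι → K} (hz : Function.Injective z) :
    ∑ i, z i * ∑ j, ∑ k ∈ univ.erase j, (z i - z j)⁻¹ * (z i - z k)⁻¹ = 0 := by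
  set T : ι → ι → ι → K := fun i j k =>
    if k ≠ j then z i * ((z i - z j)⁻¹ * (z i - z k)⁻¹) else 0
  have hcyc (i j k : ι) : T i j k + T j k i + T k i j = 0 := by
    by_cases hij : i = j
    · subst hij; simp [T]
    by_cases hjk : j = k
    · subst hjk; simp [T]
    by_cases hki : k = i
    · subst hki; simp [T]
    have hne {a b : ι} (h : a ≠ b) : z a - z b ≠ 0 := sub_ne_zero.2 (hz.ne h)
    simp only [T, if_pos (Ne.symm hij), if_pos (Ne.symm hjk), if_pos (Ne.symm hki)]
    field_simp [hne hij, hne hjk, hne hki, hne (Ne.symm hij), hne (Ne.symm hjk), hne (Ne.symm hki)]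
    ring
  have hrot : ∑ i, ∑ j, ∑ k, T j k i = ∑ i, ∑ j, ∑ k, T i j k :=
    sum_comm.trans (sum_congr rfl fun _ _ => sum_comm)
  have hrot' : ∑ i, ∑ j, ∑ k, T k i j = ∑ i, ∑ j, ∑ k, T i j k :=
    (sum_congr rfl fun _ _ => sum_comm).trans sum_comm
  have hsum : ∑ i, ∑ j, ∑ k, T i j k + ∑ i, ∑ j, ∑ k, T j k i + ∑ i, ∑ j, ∑ k, T k i j = 0 := by
    simp only [← sum_add_distrib, hcyc, sum_const_zero]
  rw [hrot, hrot'] at hsum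
  have hT : ∑ i, ∑ j, ∑ k, T i j k = 0 := by linear_combination hsum / 3
  rw [← hT]
  simp only [T, mul_sum, ← filter_ne' univ, sum_filter, mul_ite, mul_zero]


namespace VandermondeSq

variable {m : ℕ} {R : Type*}

def pairs (m : ℕ) : Finset (Fin m × Fin m) := univ.filter fun p => p.1 < p.2

def root [Ring R] (p : Fin m × Fin m) : Fin m → R := Pi.single p.1 1 - Pi.single p.2 1

def rootPairing [CommRing R] (z : Fin m → R) (p q : Fin m × Fin m) : R :=
  ∑ i, root p i * root q i * z i

/-- `∑ i, z i * ∂²/∂(z i)²` applied to `∏ k ∈ s, (z k.1 - z k.2)`. -/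
def weightedLaplacianProd [CommRing R] (s : Finset (Fin m × Fin m)) (z : Fin m → R) : R :=
  ∑ p ∈ s, ∑ q ∈ s.erase p, rootPairing z p q * ∏ k ∈ (s.erase p).erase q, (z k.1 - z k.2)

theorem sum_root [Ring R] (p : Fin m × Fin m) : ∑ i, root p i = (0 : R) := by
  simp [root, sum_sub_distrib]

theorem update_sq_sub_update_sq [CommRing R] (x : Fin m → R) (i : Fin m) (t : R)
    (p : Fin m × Fin m) :
    Function.update x i t p.1 ^ 2 - Function.update x i t p.2 ^ 2 =
      x p.1 ^ 2 - x p.2 ^ 2 + root p i * (t ^ 2 - x i ^ 2) := by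
  obtain ⟨a, b⟩ := p
  by_cases ha : a = i <;> by_cases hb : b = i <;> subst_vars <;>
    simp [root, *, Ne.symm]

theorem map_weightedLaplacianProd {S F : Type*} [CommRing R] [CommRing S] [FunLike F R S]
    [RingHomClass F R S] (f : F) (s : Finset (Fin m × Fin m)) (z : Fin m → R) :
    f (weightedLaplacianProd s z) = weightedLaplacianProd s (f ∘ z) := by
  simp only [weightedLaplacianProd, rootPairing, root, map_sum, map_prod, map_mul, map_sub,
    Pi.sub_apply, Pi.single_apply, apply_ite f, map_one, map_zero, Function.comp_apply]

theorem laplacian_prod_sq_sub_sq (s : Finset (Fin m × Fin m)) (x : Fin m → ℝ) :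
    laplacian (fun y => ∏ p ∈ s, (y p.1 ^ 2 - y p.2 ^ 2)) x =
      4 * weightedLaplacianProd s (fun i => x i ^ 2) := by
  have hline (i : Fin m) :
      iteratedDeriv 2
          (fun t => ∏ p ∈ s, (Function.update x i t p.1 ^ 2 - Function.update x i t p.2 ^ 2))
          (x i) =
        ∑ p ∈ s, ((∑ q ∈ s.erase p, (∏ k ∈ (s.erase p).erase q, (x k.1 ^ 2 - x k.2 ^ 2)) *
          (root q i * (2 * x i))) * (root p i * (2 * x i))
            + (∏ q ∈ s.erase p, (x q.1 ^ 2 - x q.2 ^ 2)) * (root p i * 2)) := by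
    simp_rw [update_sq_sub_update_sq]
    rw [iteratedDeriv_two_finsetProd (f' := fun p t => root p i * (2 * t))
      (f'' := fun p => root p i * 2)]
    · simp
    · intro p _ t
      simpa using (((hasDerivAt_pow 2 t).sub_const (x i ^ 2)).const_mul (root p i)).const_add
        (x p.1 ^ 2 - x p.2 ^ 2)
    · intro p _
      simpa using ((hasDerivAt_id (x i)).const_mul 2).const_mul (root p i)
  have htrace : ∑ i, ∑ p ∈ s, (∏ q ∈ s.erase p, (x q.1 ^ 2 - x q.2 ^ 2)) * (root p i * 2) = 0 := by
    rw [sum_comm]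
    refine sum_eq_zero fun p _ => ?_
    rw [← mul_sum, ← sum_mul, sum_root, zero_mul, mul_zero]
  rw [laplacian]
  simp only [hline, sum_add_distrib, htrace, add_zero, weightedLaplacianProd, rootPairing, mul_sum,
    sum_mul]
  rw [sum_comm]
  refine sum_congr rfl fun p _ => ?_
  rw [sum_comm]
  exact sum_congr rfl fun q _ => sum_congr rfl fun i _ => by ring

/-- On the right, the term `j = i` is `F 0⁻¹ = F 0 = 0`. -/
theorem sum_pairs_root_div {K M : Type*} [DivisionRing K] [AddCommMonoid M] (z : Fin m → K)
    (i : Fin m) (F : K → M) (hF : F 0 = 0) :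
    ∑ p ∈ pairs m, F (root p i / (z p.1 - z p.2)) = ∑ j, F (z i - z j)⁻¹ := by
  have hsplit (j : Fin m) : F (z i - z j)⁻¹ =
      (if i < j then F (z i - z j)⁻¹ else 0) + (if j < i then F (z i - z j)⁻¹ else 0) := by
    rcases lt_trichotomy i j with h | rfl | h <;> simp [*, lt_asymm]
  have hterm (a b : Fin m) : (if a < b then F (root (a, b) i / (z a - z b)) else 0) =
      (if a = i then (if i < b then F (z i - z b)⁻¹ else 0) else 0) +
        (if b = i then (if a < i then F (z i - z a)⁻¹ else 0) else 0) := by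
    rcases lt_or_ge a b with hab | hab
    · by_cases ha : a = i
      · subst ha; simp [root, hab, hab.ne']
      by_cases hb : b = i
      · subst hb; simp [root, hab, ha, neg_div, neg_inv]
      · simp [root, hab, ha, hb, Ne.symm ha, Ne.symm hb, hF]
    · rw [if_neg hab.not_gt]
      by_cases ha : a = i
      · subst ha; simp [hab.not_gt]
      by_cases hb : b = i
      · subst hb; simp [ha, hab.not_gt]
      · simp [ha, hb]
  rw [pairs, sum_filter, ← univ_product_univ, sum_product]
  simp only [hterm, sum_add_distrib, sum_ite_eq', mem_univ, if_true]
  rw [sum_comm]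
  simp only [sum_ite_eq', mem_univ, if_true, ← sum_add_distrib, ← hsplit]

theorem weightedLaplacianProd_pairs_eq_zero_of_injective {K : Type*} [Field K] [CharZero K]
    {z : Fin m → K} (hz : Function.Injective z) : weightedLaplacianProd (pairs m) z = 0 := by
  set L : Fin m × Fin m → K := fun k => z k.1 - z k.2
  set φ : Fin m → Fin m × Fin m → K := fun i p => root p i / L p
  have hL (k : Fin m × Fin m) (hk : k ∈ pairs m) : L k ≠ 0 :=
    sub_ne_zero.2 (hz.ne (mem_filter.1 hk).2.ne)
  have hterm (p : Fin m × Fin m) (hp : p ∈ pairs m) (q : Fin m × Fin m)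
      (hq : q ∈ (pairs m).erase p) :
      rootPairing z p q * ∏ k ∈ ((pairs m).erase p).erase q, L k =
        (∏ k ∈ pairs m, L k) * ∑ i, z i * (φ i p * φ i q) := by
    have := hL p hp
    have := hL q (mem_of_mem_erase hq)
    rw [← mul_prod_erase _ _ hp, ← mul_prod_erase _ _ hq, rootPairing, mul_sum, sum_mul]
    refine sum_congr rfl fun i _ => ?_
    simp only [φ]
    field_simp
  have hφ (i : Fin m) : ∑ p ∈ pairs m, ∑ q ∈ (pairs m).erase p, φ i p * φ i q =
      ∑ j, ∑ k ∈ univ.erase j, (z i - z j)⁻¹ * (z i - z k)⁻¹ := by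
    have hsum := sum_pairs_root_div z i id rfl
    have hsum_sq := sum_pairs_root_div z i (· ^ 2) (zero_pow two_ne_zero)
    simp only [id] at hsum hsum_sq
    simp only [sum_sum_erase_mul, φ, L, hsum, hsum_sq]
  calc weightedLaplacianProd (pairs m) z
      = ∑ p ∈ pairs m, ∑ q ∈ (pairs m).erase p,
          (∏ k ∈ pairs m, L k) * ∑ i, z i * (φ i p * φ i q) :=
        sum_congr rfl fun p hp => sum_congr rfl (hterm p hp)
    _ = (∏ k ∈ pairs m, L k) *
          ∑ i, z i * ∑ p ∈ pairs m, ∑ q ∈ (pairs m).erase p, φ i p * φ i q := by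
        simp only [mul_sum]
        exact (sum_congr rfl fun p _ => sum_comm).trans sum_comm
    _ = 0 := by simp only [hφ, sum_mul_inv_sub_mul_inv_sub hz, mul_zero]

theorem weightedLaplacianProd_pairs_eq_zero [CommRing R] (z : Fin m → R) :
    weightedLaplacianProd (pairs m) z = 0 := by
  let A := MvPolynomial (Fin m) ℤ
  have hinj := IsFractionRing.injective A (FractionRing A)
  have hX : weightedLaplacianProd (pairs m) (MvPolynomial.X : Fin m → A) = 0 := hinj <| by
    rw [map_weightedLaplacianProd, map_zero]
    exact weightedLaplacianProd_pairs_eq_zero_of_injective (hinj.comp MvPolynomial.X_injective)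
  have hz : z = MvPolynomial.aeval (R := ℤ) z ∘ MvPolynomial.X :=
    funext fun i => (MvPolynomial.aeval_X z i).symm
  rw [hz, ← map_weightedLaplacianProd, hX, map_zero]

end VandermondeSq

/-- The Vandermonde-of-squares polynomial `∏_{i<j} (y i ^ 2 - y j ^ 2)` (the product
of the type `D_m` positive roots) is harmonic. -/
theorem vandermonde_sq_harmonic (m : ℕ) (x : Fin m → ℝ) :
    laplacian
      (fun y : Fin m → ℝ =>
        ∏ p ∈ Finset.univ.filter fun p : Fin m × Fin m => p.1 < p.2,
          (y p.1 ^ 2 - y p.2 ^ 2)) x = 0 := by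
  have h := VandermondeSq.laplacian_prod_sq_sub_sq (VandermondeSq.pairs m) x
  rwa [VandermondeSq.weightedLaplacianProd_pairs_eq_zero, mul_zero] at h
end

section
/- For all x, y ∈ ℝ^m and t > 0, det[N_t(y_j - x_i) - N_t(y_j + x_i)]_{i,j=1}^m = (2πt)^{-m/2} e^{-(|x|²+|y|²)/(2t)} · 2^m · det[sinh(x_i y_j / t)]_{i,j=1}^m, where N_t(v) = (2πt)^{-1/2} e^{-v²/(2t)}. -/
/-!
Completing the square, `N_t(y - x) - N_t(y + x) = 2 N_t(x) e^{-y²/(2t)} sinh(xy/t)`.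
Hence the matrix is `2 · [sinh(xᵢ yⱼ / t)]` with row `i` scaled by `N_t(xᵢ)` and column `j`
by `e^{-yⱼ²/(2t)}`, and the determinant picks up the product of these factors.
-/

noncomputable def heatKernel (t v : ℝ) : ℝ :=
  (Real.sqrt (2 * Real.pi * t))⁻¹ * Real.exp (-v ^ 2 / (2 * t))

open Real

theorem heatKernel_sub_sub_heatKernel_add (t a b : ℝ) :
    heatKernel t (b - a) - heatKernel t (b + a)
      = heatKernel t a * (exp (-b ^ 2 / (2 * t)) * (2 * sinh (a * b / t))) := by
  have h_sub : -(b - a) ^ 2 / (2 * t) = -a ^ 2 / (2 * t) + (a * b / t + -b ^ 2 / (2 * t)) := by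
    ring
  have h_add : -(b + a) ^ 2 / (2 * t) = -a ^ 2 / (2 * t) + (-(a * b / t) + -b ^ 2 / (2 * t)) := by
    ring
  simp only [heatKernel, h_sub, h_add, exp_add, sinh_eq]
  ring

theorem prod_exp_neg_sq_div {ι : Type*} [Fintype ι] (t : ℝ) (x : ι → ℝ) :
    ∏ i, exp (-x i ^ 2 / (2 * t)) = exp (-(∑ i, x i ^ 2) / (2 * t)) := by
  rw [← exp_sum, ← Finset.sum_div, Finset.sum_neg_distrib]

theorem prod_heatKernel {ι : Type*} [Fintype ι] {t : ℝ} (ht : 0 ≤ t) (x : ι → ℝ) :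
    ∏ i, heatKernel t (x i)
      = (2 * π * t) ^ (-(Fintype.card ι : ℝ) / 2) * exp (-(∑ i, x i ^ 2) / (2 * t)) := by
  have h_nonneg : 0 ≤ 2 * π * t := by positivity
  have h_pow :
      (√(2 * π * t))⁻¹ ^ Fintype.card ι = (2 * π * t) ^ (-(Fintype.card ι : ℝ) / 2) := by
    rw [sqrt_eq_rpow, ← rpow_neg h_nonneg, ← rpow_natCast, ← rpow_mul h_nonneg]
    ring_nf
  simp only [heatKernel, Finset.prod_mul_distrib, Finset.prod_const, Finset.card_univ, h_pow,
    prod_exp_neg_sq_div]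

theorem Matrix.det_of_mul_mul {n R : Type*} [Fintype n] [DecidableEq n] [CommRing R]
    (u v : n → R) (A : Matrix n n R) :
    (Matrix.of fun i j => u i * (v j * A i j)).det = (∏ i, u i) * (∏ j, v j) * A.det := by
  rw [mul_assoc, ← Matrix.det_mul_row v A, ← Matrix.det_mul_column u]
  rfl

theorem det_heatKernel_sub_sub_heatKernel_add {ι : Type*} [Fintype ι] [DecidableEq ι]
    (t : ℝ) (x y : ι → ℝ) :
    (Matrix.of fun i j => heatKernel t (y j - x i) - heatKernel t (y j + x i)).det
      = (∏ i, heatKernel t (x i)) * exp (-(∑ j, y j ^ 2) / (2 * t)) * 2 ^ Fintype.card ι *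
          (Matrix.of fun i j => sinh (x i * y j / t)).det := by
  simp only [heatKernel_sub_sub_heatKernel_add]
  calc _ = (∏ i, heatKernel t (x i)) * (∏ j, exp (-y j ^ 2 / (2 * t))) *
        ((2 : ℝ) • Matrix.of fun i j => sinh (x i * y j / t)).det :=
        Matrix.det_of_mul_mul _ _ _
    _ = _ := by
      rw [Matrix.det_smul, prod_exp_neg_sq_div]
      ring

/-- `det [N_t (yⱼ - xᵢ) - N_t (yⱼ + xᵢ)]
  = (2πt)^(-m/2) e^(-(|x|²+|y|²)/(2t)) * 2^m * det [sinh (xᵢ yⱼ / t)]`. -/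
theorem det_heat_diff_eq_sinh (m : ℕ) (t : ℝ) (ht : 0 < t) (x y : Fin m → ℝ) :
    (Matrix.of fun i j : Fin m =>
        heatKernel t (y j - x i) - heatKernel t (y j + x i)).det
      = (2 * Real.pi * t) ^ (-(m : ℝ) / 2) *
          Real.exp (-((∑ i, x i ^ 2) + ∑ i, y i ^ 2) / (2 * t)) * 2 ^ m *
          (Matrix.of fun i j : Fin m => Real.sinh (x i * y j / t)).det := by
  rw [det_heatKernel_sub_sub_heatKernel_add, prod_heatKernel ht.le, Fintype.card_fin,
    neg_add, add_div, exp_add]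
  ring
end
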